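/- Suppose that for every i the matrix M_i := [[q_i Q, −C],[−Cᵀ, q_i Q]] ∈ ℝ^{2n×2n} is symmetric positive definite, and that the spectral norm of P satisfies ‖P‖₂ ≤ 1. Then A_ν has a unique fixed point z̄, and for any initial vector z_0 ∈ ℝ^{Nn} the Picard–Banach iteration z_{k+1} := A_ν(z_k) converges to z̄ as k → ∞. (Theorem 3, statement 1.) -/

import Mathlib

open Matrix Filter Topology Finset
open scoped Kronecker

noncomputable section

/-- Euclidean norm of a finitely-indexed real vector. -/
def eunorm {ι : Type*} [Fintype ι] (x : ι → ℝ) : ℝ := Real.sqrt (x ⬝ᵥ x)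

/-- `S`-weighted norm `‖x‖_S = √(xᵀ S x)`. -/
def wnorm {ι : Type*} [Fintype ι] (S : Matrix ι ι ℝ) (x : ι → ℝ) : ℝ :=
  Real.sqrt (x ⬝ᵥ S.mulVec x)

/-- Quadratic cost `J(x,z) = q·xᵀQx + 2(Cz+c)ᵀx`. -/
def cost {n : ℕ} (Q C : Matrix (Fin n) (Fin n) ℝ) (qi : ℝ) (ci : Fin n → ℝ)
    (x z : Fin n → ℝ) : ℝ :=
  qi * (x ⬝ᵥ Q.mulVec x) + 2 * ((C.mulVec z + ci) ⬝ᵥ x)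

/-- `xst` is the optimal-response map: for every `z`, `xst z` minimizes the cost over `X`. -/
def IsOptResp {n : ℕ} (X : Set (Fin n → ℝ)) (Q C : Matrix (Fin n) (Fin n) ℝ)
    (qi : ℝ) (ci : Fin n → ℝ) (xst : (Fin n → ℝ) → (Fin n → ℝ)) : Prop :=
  ∀ z, xst z ∈ X ∧ ∀ y ∈ X, cost Q C qi ci (xst z) z ≤ cost Q C qi ci y z

/-- Stacked optimal responses `x⋆(z) = (x^{1⋆}(z^1);…;x^{N⋆}(z^N))`. -/
def extMap {n N : ℕ} (xstar : Fin N → (Fin n → ℝ) → (Fin n → ℝ))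
    (z : Fin N × Fin n → ℝ) : Fin N × Fin n → ℝ :=
  fun p => xstar p.1 (fun j => z (p.1, j)) p.2

/-- Extended aggregation map `A_ν(z) = (P^ν ⊗ I_n) x⋆(z)`. -/
def aggMap {n N : ℕ} (P : Matrix (Fin N) (Fin N) ℝ) (ν : ℕ)
    (xstar : Fin N → (Fin n → ℝ) → (Fin n → ℝ)) (z : Fin N × Fin n → ℝ) :
    Fin N × Fin n → ℝ :=
  ((P ^ ν) ⊗ₖ (1 : Matrix (Fin n) (Fin n) ℝ)).mulVec (extMap xstar z)

/-- The matrix `(1/N)·1_N 1_Nᵀ` with all entries `1/N`. -/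
def avgMat (N : ℕ) : Matrix (Fin N) (Fin N) ℝ := Matrix.of fun _ _ => (N : ℝ)⁻¹

/-- Mean-field aggregation map `A(z) = ((1/N)·1 1ᵀ ⊗ I_n) x⋆(z)`. -/
def meanAgg {n N : ℕ} (xstar : Fin N → (Fin n → ℝ) → (Fin n → ℝ))
    (z : Fin N × Fin n → ℝ) : Fin N × Fin n → ℝ :=
  ((avgMat N) ⊗ₖ (1 : Matrix (Fin n) (Fin n) ℝ)).mulVec (extMap xstar z)

/-- Maximum-row-sum matrix norm `‖A‖_∞`. -/
def rowSumNorm {N : ℕ} (A : Matrix (Fin N) (Fin N) ℝ) : ℝ := ⨆ i, ∑ j, |A i j|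

/-- Spectral norm (ℓ²-operator norm) of a real matrix. -/
def specNorm {ι : Type*} [Fintype ι] [DecidableEq ι] (P : Matrix ι ι ℝ) : ℝ :=
  ‖LinearMap.toContinuousLinearMap (Matrix.toEuclideanLin P)‖

/-- Map `A_{m,m}(z) = (P^m ⊗ I_n) x⋆((P^m ⊗ I_n) z)`. -/
def halfAgg {n N : ℕ} (P : Matrix (Fin N) (Fin N) ℝ) (m : ℕ)
    (xstar : Fin N → (Fin n → ℝ) → (Fin n → ℝ)) (z : Fin N × Fin n → ℝ) :
    Fin N × Fin n → ℝ :=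
  ((P ^ m) ⊗ₖ (1 : Matrix (Fin n) (Fin n) ℝ)).mulVec
    (extMap xstar (((P ^ m) ⊗ₖ (1 : Matrix (Fin n) (Fin n) ℝ)).mulVec z))

/-! Write `Q = Bᵀ B` and measure strategies in the whitened norm `‖B x‖`. Adding the first-order
optimality conditions of two best responses gives
`q_i ‖B (x₁ - x₂)‖² ≤ -(x₁ - x₂)ᵀ C (z₁ - z₂) = -(B (x₁ - x₂))ᵀ G (B (z₁ - z₂))` with
`G = B⁻ᵀ C B⁻¹`, and `M_i ≻ 0` says exactly that `‖G‖₂ < q_i`; so every best response is a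
contraction with factor `‖G‖₂ / q_i < 1` in the whitened norm. The aggregation `P^ν ⊗ I` commutes
with `I ⊗ B` and does not increase Euclidean norms because `‖P‖₂ ≤ 1`, hence `A_ν` is a
contraction for the norm `‖(I ⊗ B) z‖` and Banach's fixed-point theorem applies. -/

open WithLp

theorem exists_fixedPoint_tendsto_iterate_of_homeomorph {α E : Type*} [TopologicalSpace α]
    [MetricSpace E] [CompleteSpace E] [Nonempty α] (Φ : α ≃ₜ E) {f : α → α} {K : NNReal}
    (hK : K < 1) (hf : ∀ u v, dist (Φ (f u)) (Φ (f v)) ≤ K * dist (Φ u) (Φ v)) :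
    ∃ x, f x = x ∧ (∀ y, f y = y → y = x) ∧
      ∀ x₀, Tendsto (fun k => f^[k] x₀) atTop (𝓝 x) := by
  have : Nonempty E := ⟨Φ (Classical.arbitrary α)⟩
  set g := Φ ∘ f ∘ Φ.symm
  have hg : ContractingWith K g := ⟨hK, LipschitzWith.of_dist_le_mul fun ζ η => by
    simpa [g] using hf (Φ.symm ζ) (Φ.symm η)⟩
  have hconj : Function.Semiconj Φ.symm g f := fun ζ => by simp [g]
  refine ⟨Φ.symm (ContractingWith.fixedPoint g hg), ?_, fun y hy => ?_, fun x₀ => ?_⟩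
  · rw [← hconj, hg.fixedPoint_isFixedPt]
  · have : Function.IsFixedPt g (Φ y) := by simp [g, Function.IsFixedPt, hy]
    rw [← hg.fixedPoint_unique this, Φ.symm_apply_apply]
  · have hiter (k : ℕ) : f^[k] x₀ = Φ.symm (g^[k] (Φ x₀)) := by
      rw [(hconj.iterate_right k).eq, Φ.symm_apply_apply]
    simp_rw [hiter]
    exact (Φ.symm.continuous.tendsto _).comp (hg.tendsto_iterate_fixedPoint (Φ x₀))

theorem ContinuousLinearMap.norm_lt_of_forall_norm_apply_lt {E F : Type*}
    [NormedAddCommGroup E] [NormedSpace ℝ E] [FiniteDimensional ℝ E]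
    [SeminormedAddCommGroup F] [NormedSpace ℝ F] (f : E →L[ℝ] F) {c : ℝ} (hc : 0 < c)
    (hf : ∀ x, x ≠ 0 → ‖f x‖ < c * ‖x‖) : ‖f‖ < c := by
  rcases subsingleton_or_nontrivial E with hE | hE
  · rwa [f.opNorm_subsingleton]
  obtain ⟨x, hx, hfx⟩ := (isCompact_sphere (0 : E) 1).image_of_continuousOn
      (f.continuous.norm).continuousOn |>.sSup_mem
      ((NormedSpace.sphere_nonempty.mpr zero_le_one).image _)
  rw [← f.sSup_sphere_eq_norm, ← hfx]
  have hx1 : ‖x‖ = 1 := mem_sphere_zero_iff_norm.mp hx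
  simpa [hx1] using hf x (ne_zero_of_norm_ne_zero (by simp [hx1]))

section Euclidean

variable {ι κ : Type*} [Fintype ι] [Fintype κ]

theorem dotProduct_self_eq_norm_toLp_sq (x : ι → ℝ) : x ⬝ᵥ x = ‖toLp 2 x‖ ^ 2 := by
  rw [← real_inner_self_eq_norm_sq, EuclideanSpace.inner_toLp_toLp, star_trivial]

theorem abs_dotProduct_le_norm_toLp_mul (x y : ι → ℝ) :
    |x ⬝ᵥ y| ≤ ‖toLp 2 x‖ * ‖toLp 2 y‖ := by
  simpa [EuclideanSpace.inner_toLp_toLp, dotProduct_comm] using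
    abs_real_inner_le_norm (toLp 2 x) (toLp 2 y)

theorem norm_toLp_sq_eq_sum_rows (w : ι × κ → ℝ) :
    ‖toLp 2 w‖ ^ 2 = ∑ i, ‖toLp 2 fun j => w (i, j)‖ ^ 2 := by
  simp [EuclideanSpace.norm_sq_eq, Fintype.sum_prod_type]

theorem norm_toLp_sq_eq_sum_cols (w : ι × κ → ℝ) :
    ‖toLp 2 w‖ ^ 2 = ∑ j, ‖toLp 2 fun i => w (i, j)‖ ^ 2 := by
  simp [EuclideanSpace.norm_sq_eq, Fintype.sum_prod_type_right]

theorem norm_toLp_le_of_rows_le {x y : ι × κ → ℝ} {c : ℝ} (hc : 0 ≤ c)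
    (h : ∀ i, ‖toLp 2 fun j => x (i, j)‖ ≤ c * ‖toLp 2 fun j => y (i, j)‖) :
    ‖toLp 2 x‖ ≤ c * ‖toLp 2 y‖ := by
  rw [← pow_le_pow_iff_left₀ (norm_nonneg _) (by positivity) two_ne_zero, mul_pow,
    norm_toLp_sq_eq_sum_rows, norm_toLp_sq_eq_sum_rows, Finset.mul_sum]
  gcongr with i
  rw [← mul_pow]
  exact pow_le_pow_left₀ (norm_nonneg _) (h i) 2

theorem kronecker_one_mulVec_apply [DecidableEq κ] (A : Matrix ι ι ℝ) (w : ι × κ → ℝ)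
    (i : ι) (j : κ) :
    ((A ⊗ₖ (1 : Matrix κ κ ℝ)) *ᵥ w) (i, j) = (A *ᵥ fun k => w (k, j)) i := by
  simp [mulVec, dotProduct, Fintype.sum_prod_type, one_apply]

theorem one_kronecker_mulVec_apply [DecidableEq ι] (B : Matrix κ κ ℝ) (w : ι × κ → ℝ)
    (i : ι) (j : κ) :
    (((1 : Matrix ι ι ℝ) ⊗ₖ B) *ᵥ w) (i, j) = (B *ᵥ fun l => w (i, l)) j := by
  simp [mulVec, dotProduct, Fintype.sum_prod_type, one_apply]

theorem commute_one_kronecker_kronecker_one [DecidableEq ι] [DecidableEq κ] (A : Matrix ι ι ℝ)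
    (B : Matrix κ κ ℝ) : Commute ((1 : Matrix ι ι ℝ) ⊗ₖ B) (A ⊗ₖ (1 : Matrix κ κ ℝ)) := by
  rw [Commute, SemiconjBy, ← mul_kronecker_mul, ← mul_kronecker_mul, Matrix.one_mul,
    Matrix.mul_one, Matrix.mul_one, Matrix.one_mul]

theorem norm_toLp_kronecker_one_mulVec_le [DecidableEq κ] {A : Matrix ι ι ℝ}
    (hA : ∀ x, ‖toLp 2 (A *ᵥ x)‖ ≤ ‖toLp 2 x‖) (w : ι × κ → ℝ) :
    ‖toLp 2 ((A ⊗ₖ (1 : Matrix κ κ ℝ)) *ᵥ w)‖ ≤ ‖toLp 2 w‖ := by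
  rw [← pow_le_pow_iff_left₀ (norm_nonneg _) (norm_nonneg _) two_ne_zero,
    norm_toLp_sq_eq_sum_cols, norm_toLp_sq_eq_sum_cols]
  gcongr with j
  simp_rw [kronecker_one_mulVec_apply]
  exact hA _

variable [DecidableEq ι]

theorem norm_toLp_mulVec_le_specNorm (A : Matrix ι ι ℝ) (x : ι → ℝ) :
    ‖toLp 2 (A *ᵥ x)‖ ≤ specNorm A * ‖toLp 2 x‖ := by
  simpa [specNorm] using (toEuclideanLin A).toContinuousLinearMap.le_opNorm (toLp 2 x)

theorem specNorm_lt_of_forall_norm_lt {A : Matrix ι ι ℝ} {c : ℝ} (hc : 0 < c)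
    (hA : ∀ x, x ≠ 0 → ‖toLp 2 (A *ᵥ x)‖ < c * ‖toLp 2 x‖) : specNorm A < c :=
  ContinuousLinearMap.norm_lt_of_forall_norm_apply_lt _ hc fun x hx => by
    simpa [toLpLin_apply] using hA (ofLp x) (by simpa using hx)

theorem norm_toLp_pow_mulVec_le {A : Matrix ι ι ℝ} (hA : specNorm A ≤ 1) (k : ℕ) (x : ι → ℝ) :
    ‖toLp 2 ((A ^ k) *ᵥ x)‖ ≤ ‖toLp 2 x‖ := by
  induction k with
  | zero => simp
  | succ k ih =>
    rw [pow_succ', ← mulVec_mulVec]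
    exact (norm_toLp_mulVec_le_specNorm A _).trans
      (mul_le_of_le_one_left (norm_nonneg _) hA |>.trans ih)

end Euclidean

section Whitening

variable {ι : Type*} [Fintype ι]

theorem dotProduct_mulVec_conj (S M : Matrix ι ι ℝ) (a b : ι → ℝ) :
    (S *ᵥ a) ⬝ᵥ M *ᵥ (S *ᵥ b) = a ⬝ᵥ (Sᵀ * M * S) *ᵥ b := by
  rw [← mulVec_mulVec, ← mulVec_mulVec, dotProduct_transpose_mulVec, dotProduct_comm]

theorem dotProduct_transpose_mul_self_mulVec (B : Matrix ι ι ℝ) (d : ι → ℝ) :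
    d ⬝ᵥ (Bᵀ * B) *ᵥ d = ‖toLp 2 (B *ᵥ d)‖ ^ 2 := by
  rw [← mulVec_mulVec, dotProduct_transpose_mulVec, dotProduct_self_eq_norm_toLp_sq]

variable [DecidableEq ι]

theorem dotProduct_mulVec_eq_whitened {B : Matrix ι ι ℝ} (hB : IsUnit B) (M : Matrix ι ι ℝ)
    (d e : ι → ℝ) : d ⬝ᵥ M *ᵥ e = (B *ᵥ d) ⬝ᵥ ((B⁻¹)ᵀ * M * B⁻¹) *ᵥ (B *ᵥ e) := by
  have hBB (v : ι → ℝ) : B⁻¹ *ᵥ (B *ᵥ v) = v := by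
    rw [mulVec_mulVec, nonsing_inv_mul B ((isUnit_iff_isUnit_det B).mp hB), one_mulVec]
  rw [← dotProduct_mulVec_conj, hBB, hBB]

open scoped MatrixOrder in
theorem Matrix.PosDef.exists_isUnit_eq_transpose_mul_self {Q : Matrix ι ι ℝ} (hQ : Q.PosDef) :
    ∃ B, IsUnit B ∧ Q = Bᵀ * B := by
  obtain ⟨B, hB, hQB⟩ :=
    CStarAlgebra.isStrictlyPositive_iff_eq_star_mul_self.mp hQ.isStrictlyPositive
  exact ⟨B, hB, by rwa [star_eq_conjTranspose, conjTranspose_eq_transpose_of_trivial] at hQB⟩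

def toLpMulVecHomeomorph (W : Matrix ι ι ℝ) (hW : IsUnit W) : (ι → ℝ) ≃ₜ EuclideanSpace ℝ ι where
  toFun x := toLp 2 (W *ᵥ x)
  invFun ζ := W⁻¹ *ᵥ ofLp ζ
  left_inv x := by
    simp [mulVec_mulVec, nonsing_inv_mul W ((isUnit_iff_isUnit_det W).mp hW)]
  right_inv ζ := by
    simp [mulVec_mulVec, mul_nonsing_inv W ((isUnit_iff_isUnit_det W).mp hW)]
  continuous_toFun := by fun_prop
  continuous_invFun := by fun_prop

theorem dist_toLpMulVecHomeomorph {W : Matrix ι ι ℝ} (hW : IsUnit W) (x y : ι → ℝ) :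
    dist (toLpMulVecHomeomorph W hW x) (toLpMulVecHomeomorph W hW y)
      = ‖toLp 2 (W *ᵥ (x - y))‖ := by
  simp [toLpMulVecHomeomorph, dist_eq_norm, mulVec_sub]

end Whitening

theorem nonneg_of_forall_nonneg_add_mul {L K : ℝ}
    (h : ∀ t : ℝ, 0 < t → t ≤ 1 → 0 ≤ L + t * K) : 0 ≤ L := by
  have hlim : Tendsto (fun t => L + t * K) (𝓝[>] 0) (𝓝 L) :=
    ((by fun_prop : Continuous fun t : ℝ => L + t * K).tendsto' 0 L (by simp)).mono_left
      nhdsWithin_le_nhds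
  refine ge_of_tendsto hlim ?_
  filter_upwards [Ioc_mem_nhdsGT one_pos] with t ht using h t ht.1 ht.2

section OptimalResponse

variable {n : ℕ} {X : Set (Fin n → ℝ)} {Q C : Matrix (Fin n) (Fin n) ℝ} {q : ℝ}
  {c : Fin n → ℝ} {xst : (Fin n → ℝ) → Fin n → ℝ}

theorem cost_add_smul (hQ : Qᵀ = Q) (x d z : Fin n → ℝ) (t : ℝ) :
    cost Q C q c (x + t • d) z = cost Q C q c x z
      + 2 * t * (q * (d ⬝ᵥ Q *ᵥ x) + (C *ᵥ z + c) ⬝ᵥ d) + t ^ 2 * (q * (d ⬝ᵥ Q *ᵥ d)) := by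
  have hsymm : x ⬝ᵥ Q *ᵥ d = d ⬝ᵥ Q *ᵥ x := by
    rw [← dotProduct_transpose_mulVec, hQ]
  simp only [cost, mulVec_add, mulVec_smul, dotProduct_add, add_dotProduct, dotProduct_smul,
    smul_dotProduct, smul_eq_mul, hsymm]
  ring

theorem IsOptResp.variational_ineq (hQ : Qᵀ = Q) (hX : Convex ℝ X)
    (h : IsOptResp X Q C q c xst) (z : Fin n → ℝ) {y : Fin n → ℝ} (hy : y ∈ X) :
    0 ≤ q * ((y - xst z) ⬝ᵥ Q *ᵥ xst z) + (C *ᵥ z + c) ⬝ᵥ (y - xst z) := by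
  refine nonneg_of_forall_nonneg_add_mul
    (K := q * ((y - xst z) ⬝ᵥ Q *ᵥ (y - xst z)) / 2) fun t ht0 ht1 => ?_
  have hmin := (h z).2 _ (hX.add_smul_sub_mem (h z).1 hy ⟨ht0.le, ht1⟩)
  rw [cost_add_smul hQ] at hmin
  nlinarith

theorem IsOptResp.mul_quadForm_sub_le (hQ : Qᵀ = Q) (hX : Convex ℝ X)
    (h : IsOptResp X Q C q c xst) (z₁ z₂ : Fin n → ℝ) :
    q * ((xst z₁ - xst z₂) ⬝ᵥ Q *ᵥ (xst z₁ - xst z₂))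
      ≤ -((xst z₁ - xst z₂) ⬝ᵥ C *ᵥ (z₁ - z₂)) := by
  have h₁ := h.variational_ineq hQ hX z₁ (h z₂).1
  have h₂ := h.variational_ineq hQ hX z₂ (h z₁).1
  have hsymm : xst z₂ ⬝ᵥ Q *ᵥ xst z₁ = xst z₁ ⬝ᵥ Q *ᵥ xst z₂ := by
    rw [← dotProduct_transpose_mulVec, hQ]
  simp only [mulVec_sub, dotProduct_sub, sub_dotProduct, add_dotProduct, hsymm] at h₁ h₂ ⊢
  simp only [dotProduct_comm (C *ᵥ _)] at h₁ h₂
  nlinarith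

end OptimalResponse

section Agent

variable {n : ℕ} {Q C B : Matrix (Fin n) (Fin n) ℝ} {q : ℝ}

theorem norm_whitened_mulVec_lt_of_posDef (hQB : Q = Bᵀ * B) (hB : IsUnit B) (hq : 0 < q)
    (hM : (fromBlocks (q • Q) (-C) (-Cᵀ) (q • Q)).PosDef) {b : Fin n → ℝ} (hb : b ≠ 0) :
    ‖toLp 2 (((B⁻¹)ᵀ * C * B⁻¹) *ᵥ b)‖ < q * ‖toLp 2 b‖ := by
  set g := ((B⁻¹)ᵀ * C * B⁻¹) *ᵥ b
  have hBB (v : Fin n → ℝ) : B *ᵥ (B⁻¹ *ᵥ v) = v := by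
    rw [mulVec_mulVec, mul_nonsing_inv B ((isUnit_iff_isUnit_det B).mp hB), one_mulVec]
  have hquad (v : Fin n → ℝ) : (B⁻¹ *ᵥ v) ⬝ᵥ Q *ᵥ (B⁻¹ *ᵥ v) = ‖toLp 2 v‖ ^ 2 := by
    rw [hQB, dotProduct_transpose_mul_self_mulVec, hBB]
  have hcross : (B⁻¹ *ᵥ g) ⬝ᵥ C *ᵥ (B⁻¹ *ᵥ b) = ‖toLp 2 g‖ ^ 2 := by
    rw [dotProduct_mulVec_conj, dotProduct_self_eq_norm_toLp_sq]
  have hcross' : (B⁻¹ *ᵥ b) ⬝ᵥ Cᵀ *ᵥ (B⁻¹ *ᵥ g) = ‖toLp 2 g‖ ^ 2 := by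
    rw [dotProduct_transpose_mulVec, hcross]
  -- for `v = q B⁻¹ b` the form is minimal in `u` at `u = B⁻¹ g`
  have hx : Sum.elim (B⁻¹ *ᵥ g) (q • (B⁻¹ *ᵥ b)) ≠ 0 := fun h => hb <| by
    have := congrArg (fun x => B *ᵥ x ∘ Sum.inr) h
    simpa [mulVec_smul, hBB, hq.ne'] using this
  have hpos := hM.dotProduct_mulVec_pos hx
  simp only [star_trivial, fromBlocks_mulVec, sumElim_dotProduct_sumElim, Sum.elim_comp_inl,
    Sum.elim_comp_inr, dotProduct_add, smul_mulVec, neg_mulVec, mulVec_smul, dotProduct_neg,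
    dotProduct_smul, smul_dotProduct, smul_eq_mul, hquad, hcross, hcross'] at hpos
  have hsq : ‖toLp 2 g‖ ^ 2 < (q * ‖toLp 2 b‖) ^ 2 := by nlinarith
  exact lt_of_pow_lt_pow_left₀ 2 (by positivity) hsq

variable {X : Set (Fin n → ℝ)} {c : Fin n → ℝ} {xst : (Fin n → ℝ) → Fin n → ℝ}

theorem IsOptResp.norm_whitened_sub_le (hQB : Q = Bᵀ * B) (hB : IsUnit B) (hq : 0 < q)
    (hX : Convex ℝ X) (h : IsOptResp X Q C q c xst) (z₁ z₂ : Fin n → ℝ) :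
    ‖toLp 2 (B *ᵥ (xst z₁ - xst z₂))‖
      ≤ specNorm ((B⁻¹)ᵀ * C * B⁻¹) / q * ‖toLp 2 (B *ᵥ (z₁ - z₂))‖ := by
  set a := B *ᵥ (xst z₁ - xst z₂)
  set b := B *ᵥ (z₁ - z₂)
  set σ := specNorm ((B⁻¹)ᵀ * C * B⁻¹)
  have hQ : Qᵀ = Q := by rw [hQB, transpose_mul, transpose_transpose]
  have key : q * ‖toLp 2 a‖ ^ 2 ≤ ‖toLp 2 a‖ * (σ * ‖toLp 2 b‖) :=
    calc q * ‖toLp 2 a‖ ^ 2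
        = q * ((xst z₁ - xst z₂) ⬝ᵥ Q *ᵥ (xst z₁ - xst z₂)) := by
          rw [hQB, dotProduct_transpose_mul_self_mulVec]
      _ ≤ -((xst z₁ - xst z₂) ⬝ᵥ C *ᵥ (z₁ - z₂)) := h.mul_quadForm_sub_le hQ hX z₁ z₂
      _ ≤ |a ⬝ᵥ ((B⁻¹)ᵀ * C * B⁻¹) *ᵥ b| := by
          rw [← dotProduct_mulVec_eq_whitened hB]; exact neg_le_abs _
      _ ≤ ‖toLp 2 a‖ * (σ * ‖toLp 2 b‖) :=
          (abs_dotProduct_le_norm_toLp_mul _ _).trans <| by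
            gcongr; exact norm_toLp_mulVec_le_specNorm _ _
  rw [div_mul_eq_mul_div, le_div_iff₀ hq]
  rcases (norm_nonneg (toLp 2 a)).eq_or_lt with ha | ha
  · rw [← ha, zero_mul]; exact mul_nonneg (norm_nonneg _) (norm_nonneg _)
  · nlinarith

end Agent

section Aggregation

variable {n N : ℕ} {B : Matrix (Fin n) (Fin n) ℝ} {xstar : Fin N → (Fin n → ℝ) → Fin n → ℝ}
  {κ : ℝ}

theorem norm_whitened_extMap_sub_le (hκ : 0 ≤ κ)
    (h : ∀ i z₁ z₂, ‖toLp 2 (B *ᵥ (xstar i z₁ - xstar i z₂))‖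
      ≤ κ * ‖toLp 2 (B *ᵥ (z₁ - z₂))‖) (u v : Fin N × Fin n → ℝ) :
    ‖toLp 2 (((1 : Matrix (Fin N) (Fin N) ℝ) ⊗ₖ B) *ᵥ (extMap xstar u - extMap xstar v))‖
      ≤ κ * ‖toLp 2 (((1 : Matrix (Fin N) (Fin N) ℝ) ⊗ₖ B) *ᵥ (u - v))‖ :=
  norm_toLp_le_of_rows_le hκ fun i => by
    simp only [one_kronecker_mulVec_apply]
    exact h i (fun j => u (i, j)) (fun j => v (i, j))

theorem norm_whitened_aggMap_sub_le {P : Matrix (Fin N) (Fin N) ℝ} (hP : specNorm P ≤ 1)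
    (ν : ℕ) (hκ : 0 ≤ κ)
    (h : ∀ i z₁ z₂, ‖toLp 2 (B *ᵥ (xstar i z₁ - xstar i z₂))‖
      ≤ κ * ‖toLp 2 (B *ᵥ (z₁ - z₂))‖) (u v : Fin N × Fin n → ℝ) :
    ‖toLp 2 (((1 : Matrix (Fin N) (Fin N) ℝ) ⊗ₖ B) *ᵥ
        (aggMap P ν xstar u - aggMap P ν xstar v))‖
      ≤ κ * ‖toLp 2 (((1 : Matrix (Fin N) (Fin N) ℝ) ⊗ₖ B) *ᵥ (u - v))‖ := by
  rw [aggMap, aggMap, ← mulVec_sub, mulVec_mulVec,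
    (commute_one_kronecker_kronecker_one (P ^ ν) B).eq, ← mulVec_mulVec]
  exact (norm_toLp_kronecker_one_mulVec_le (norm_toLp_pow_mulVec_le hP ν) _).trans
    (norm_whitened_extMap_sub_le hκ h u v)

end Aggregation

theorem picardBanach_converges_general {n N ν : ℕ}
    (X : Fin N → Set (Fin n → ℝ))
    (hXconv : ∀ i, Convex ℝ (X i))
    (Q C : Matrix (Fin n) (Fin n) ℝ) (hQ : Q.PosDef)
    (q : Fin N → ℝ) (hq : ∀ i, 0 < q i) (c : Fin N → Fin n → ℝ)
    (P : Matrix (Fin N) (Fin N) ℝ)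
    (hM : ∀ i, (Matrix.fromBlocks (q i • Q) (-C) (-Cᵀ) (q i • Q)).PosDef)
    (hP2 : specNorm P ≤ 1)
    (xstar : Fin N → (Fin n → ℝ) → (Fin n → ℝ))
    (hxstar : ∀ i, IsOptResp (X i) Q C (q i) (c i) (xstar i)) :
    ∃ zbar : Fin N × Fin n → ℝ,
      aggMap P ν xstar zbar = zbar ∧
      (∀ z, aggMap P ν xstar z = z → z = zbar) ∧
      ∀ z0 : Fin N × Fin n → ℝ,
        Tendsto (fun k => (aggMap P ν xstar)^[k] z0) atTop (𝓝 zbar) := by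
  obtain ⟨B, hB, hQB⟩ := hQ.exists_isUnit_eq_transpose_mul_self
  set G := (B⁻¹)ᵀ * C * B⁻¹
  let κ : Fin N → NNReal := fun i => ⟨specNorm G / q i, div_nonneg (norm_nonneg _) (hq i).le⟩
  set K := Finset.univ.sup κ
  have hK : K < 1 := (Finset.sup_lt_iff zero_lt_one).mpr fun i _ =>
    (div_lt_one (hq i)).mpr (specNorm_lt_of_forall_norm_lt (hq i) fun _ hb =>
      norm_whitened_mulVec_lt_of_posDef hQB hB (hq i) (hM i) hb)
  have hagent (i : Fin N) (z₁ z₂ : Fin n → ℝ) :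
      ‖toLp 2 (B *ᵥ (xstar i z₁ - xstar i z₂))‖ ≤ K * ‖toLp 2 (B *ᵥ (z₁ - z₂))‖ :=
    ((hxstar i).norm_whitened_sub_le hQB hB (hq i) (hXconv i) z₁ z₂).trans <|
      mul_le_mul_of_nonneg_right (Finset.le_sup (f := κ) (Finset.mem_univ i)) (norm_nonneg _)
  have hW : IsUnit ((1 : Matrix (Fin N) (Fin N) ℝ) ⊗ₖ B) := isUnit_one.kronecker hB
  refine exists_fixedPoint_tendsto_iterate_of_homeomorph (toLpMulVecHomeomorph _ hW) hK
    fun u v => ?_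
  rw [dist_toLpMulVecHomeomorph, dist_toLpMulVecHomeomorph]
  exact norm_whitened_aggMap_sub_le hP2 ν K.2 hagent u v

/-- Theorem 3, case 1: if each `M_i ≻ 0` and `‖P‖₂ ≤ 1`, then `A_ν` has a
unique fixed point and the Picard–Banach iteration converges to it from any start. -/
theorem picardBanach_converges {n N ν : ℕ} (hn : 0 < n) (hN : 0 < N) (hν : 0 < ν)
    (X : Fin N → Set (Fin n → ℝ))
    (hXne : ∀ i, (X i).Nonempty) (hXconv : ∀ i, Convex ℝ (X i))
    (hXcpt : ∀ i, IsCompact (X i))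
    (Q C : Matrix (Fin n) (Fin n) ℝ) (hQ : Q.PosDef)
    (q : Fin N → ℝ) (hq : ∀ i, 0 < q i) (c : Fin N → Fin n → ℝ)
    (P : Matrix (Fin N) (Fin N) ℝ) (hPnn : ∀ i j, 0 ≤ P i j)
    (hPrs : ∀ i, ∑ j, P i j = 1)
    (hM : ∀ i, (Matrix.fromBlocks (q i • Q) (-C) (-Cᵀ) (q i • Q)).PosDef)
    (hP2 : specNorm P ≤ 1)
    (xstar : Fin N → (Fin n → ℝ) → (Fin n → ℝ))
    (hxstar : ∀ i, IsOptResp (X i) Q C (q i) (c i) (xstar i)) :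
    ∃ zbar : Fin N × Fin n → ℝ,
      aggMap P ν xstar zbar = zbar ∧
      (∀ z, aggMap P ν xstar z = z → z = zbar) ∧
      ∀ z0 : Fin N × Fin n → ℝ,
        Tendsto (fun k => (aggMap P ν xstar)^[k] z0) atTop (𝓝 zbar) :=
  picardBanach_converges_general X hXconv Q C hQ q hq c P hM hP2 xstar hxstar
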